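/- arXiv:1703.06424 — 7 statements merged into one kernel-verified Lean document; each statement's English description precedes it below -/
import Mathlib

section
/- Let n ≥ 2 and d ≥ 1 be integers and let a be a natural number. If 2a = (n+1)(d−1) and d^n = C(a+n, n) (the ordinary binomial coefficient), then d = 1 and a = 0. -/
/-!
Write `C(a+n, n) · n! = ∏_{i=1}^n (a + i)`. Pairing the factors `a + i` and `a + j` with
`i + j = n + 1`, the relation `2a = (i + j)(d - 1)` gives
`4 (a + i)(a + j) = 4 (d i)(d j) + (d² - 1)(i - j)²`, so each pair dominates `(d i)(d j)`,
strictly when `d ≥ 2` and `i ≠ j`. Multiplying over all pairs, `(n! dⁿ)² < (n! C(a+n, n))²`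
whenever `d ≥ 2` and `n ≥ 2`, which contradicts `dⁿ = C(a+n, n)`.
-/

open Finset Nat

theorem four_mul_add_mul_add_of_two_mul_eq {R : Type*} [CommRing R] {a d i j : R}
    (h : 2 * a = (i + j) * (d - 1)) :
    4 * ((a + i) * (a + j)) = 4 * ((d * i) * (d * j)) + (d ^ 2 - 1) * (i - j) ^ 2 := by
  linear_combination (2 * a + (i + j) * (d - 1) + 2 * (i + j)) * h

section pairing

variable {a d i j : ℕ}

theorem four_mul_natCast_add_mul_add (hd : 1 ≤ d) (h : 2 * a = (i + j) * (d - 1)) :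
    4 * (((a : ℤ) + i) * (a + j)) = 4 * ((d * i) * (d * j)) + (d ^ 2 - 1) * (i - j) ^ 2 :=
  four_mul_add_mul_add_of_two_mul_eq (by exact_mod_cast h)

theorem mul_mul_le_add_mul_add (hd : 1 ≤ d) (h : 2 * a = (i + j) * (d - 1)) :
    (d * i) * (d * j) ≤ (a + i) * (a + j) := by
  have key := four_mul_natCast_add_mul_add hd h
  have hd2 : (1 : ℤ) ≤ (d : ℤ) ^ 2 := one_le_pow₀ (by exact_mod_cast hd)
  have : (0 : ℤ) ≤ (d ^ 2 - 1) * (i - j) ^ 2 := mul_nonneg (by linarith) (sq_nonneg _)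
  zify
  linarith

theorem mul_mul_lt_add_mul_add (hd : 2 ≤ d) (hij : i ≠ j) (h : 2 * a = (i + j) * (d - 1)) :
    (d * i) * (d * j) < (a + i) * (a + j) := by
  have key := four_mul_natCast_add_mul_add (by omega) h
  have hd2 : (1 : ℤ) < (d : ℤ) ^ 2 := one_lt_pow₀ (by exact_mod_cast hd) two_ne_zero
  have hij' : (0 : ℤ) < ((i : ℤ) - j) ^ 2 := by
    have : (i : ℤ) - j ≠ 0 := sub_ne_zero.mpr (by exact_mod_cast hij)
    positivity
  have : (0 : ℤ) < (d ^ 2 - 1) * (i - j) ^ 2 := mul_pos (by linarith) hij'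
  zify
  linarith

end pairing

theorem sq_prod_range_eq_prod_mul_reflect {M : Type*} [CommMonoid M] (f : ℕ → M) (n : ℕ) :
    (∏ i ∈ range n, f i) ^ 2 = ∏ i ∈ range n, f i * f (n - 1 - i) := by
  rw [sq, prod_mul_distrib, prod_range_reflect]

theorem factorial_mul_pow_lt_ascFactorial {n d a : ℕ} (hn : 2 ≤ n) (hd : 2 ≤ d)
    (h : 2 * a = (n + 1) * (d - 1)) : n ! * d ^ n < (a + 1).ascFactorial n := by
  have hpair : ∀ i ∈ range n, 2 * a = (i + 1 + (n - 1 - i + 1)) * (d - 1) := by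
    intro i hi
    rwa [show i + 1 + (n - 1 - i + 1) = n + 1 by have := mem_range.mp hi; omega]
  have hlhs : n ! * d ^ n = ∏ i ∈ range n, d * (i + 1) := by
    rw [prod_mul_distrib, prod_const, card_range, prod_range_add_one_eq_factorial, mul_comm]
  have hrhs : (a + 1).ascFactorial n = ∏ i ∈ range n, (a + (i + 1)) := by
    rw [ascFactorial_eq_prod_range]
    exact prod_congr rfl fun i _ => by ring
  refine lt_of_pow_lt_pow_left₀ 2 (Nat.zero_le _) ?_
  rw [hlhs, hrhs, sq_prod_range_eq_prod_mul_reflect, sq_prod_range_eq_prod_mul_reflect]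
  refine prod_lt_prod (fun i _ => by positivity)
    (fun i hi => mul_mul_le_add_mul_add (by omega) (hpair i hi)) ⟨0, mem_range.mpr (by omega), ?_⟩
  exact mul_mul_lt_add_mul_add hd (by omega) (hpair 0 (mem_range.mpr (by omega)))

/-- Arithmetic core of the classification of rank 1 Ulrich bundles on `(ℙⁿ, O(d))`:
if `n ≥ 2`, `d ≥ 1`, `2a = (n+1)(d-1)` and `d^n = C(a+n, n)`, then `d = 1` and `a = 0`. -/
theorem stmt_0 (n d a : ℕ) (hn : 2 ≤ n) (hd : 1 ≤ d)
    (h1 : 2 * a = (n + 1) * (d - 1)) (h2 : d ^ n = Nat.choose (a + n) n) :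
    d = 1 ∧ a = 0 := by
  rcases Nat.lt_or_ge d 2 with hd2 | hd2
  · obtain rfl : d = 1 := by omega
    exact ⟨rfl, by simpa using h1⟩
  · have key := factorial_mul_pow_lt_ascFactorial hn hd2 h1
    rw [ascFactorial_eq_factorial_mul_choose, ← h2] at key
    exact (lt_irrefl _ key).elim
end

section
/- Let n ≥ 2 be an integer and let d be a real number with d > 1. Then ∏_{i=1}^{n} ((n+1)(d−1)/2 + i) > n! · d^n. -/
open Finset

/-- For integers `n ≥ 2` and real `d > 1`,
`∏_{i=1}^{n} ((n+1)(d−1)/2 + i) > n! · d^n`. -/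
theorem stmt_1 (n : ℕ) (hn : 2 ≤ n) (d : ℝ) (hd : 1 < d) :
    ∏ i ∈ Finset.Icc 1 n, (((n : ℝ) + 1) * (d - 1) / 2 + (i : ℝ)) >
      (Nat.factorial n : ℝ) * d ^ n := by
  have hd1 : 0 < d - 1 := by linarith
  set c : ℝ := ((n : ℝ) + 1) * (d - 1) / 2 with hc
  have hc0 : 0 < c := by positivity
  -- rewrite as a range product
  have hP : ∏ i ∈ Finset.Icc 1 n, (c + (i : ℝ))
      = ∏ i ∈ Finset.range n, (c + ((i : ℝ) + 1)) := by
    rw [← Finset.Ico_add_one_right_eq_Icc, Finset.prod_Ico_eq_prod_range]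
    apply Finset.prod_congr (by simp)
    intro i _
    push_cast
    ring
  rw [hP]
  set P : ℝ := ∏ i ∈ Finset.range n, (c + ((i : ℝ) + 1)) with hPdef
  have hPpos : 0 < P := by
    apply Finset.prod_pos
    intro i _
    positivity
  -- reflected product
  have hrefl : P = ∏ i ∈ Finset.range n, (c + ((n : ℝ) - (i : ℝ))) := by
    rw [hPdef, ← Finset.prod_range_reflect]
    apply Finset.prod_congr rfl
    intro i hi
    simp only [Finset.mem_range] at hi
    have h1 : (n - 1 - i) + (i + 1) = n := by omega
    have h2 : ((n - 1 - i : ℕ) : ℝ) = (n : ℝ) - (i : ℝ) - 1 := by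
      have := congrArg (Nat.cast : ℕ → ℝ) h1
      push_cast at this
      linarith
    rw [h2]
    ring
  have hsq : P * P = ∏ i ∈ Finset.range n,
      ((c + ((i : ℝ) + 1)) * (c + ((n : ℝ) - (i : ℝ)))) := by
    rw [Finset.prod_mul_distrib, ← hPdef, ← hrefl]
  -- termwise comparison
  have hterm : ∀ i ∈ Finset.range n,
      ((i : ℝ) + 1) * ((n : ℝ) - (i : ℝ)) * d ^ 2
        ≤ (c + ((i : ℝ) + 1)) * (c + ((n : ℝ) - (i : ℝ))) := by
    intro i hi
    simp only [Finset.mem_range] at hi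
    have hin : (i : ℝ) + 1 ≤ (n : ℝ) := by exact_mod_cast hi
    have hd2 : 0 < d ^ 2 - 1 := by nlinarith
    have key : 0 ≤ (d ^ 2 - 1) * ((n : ℝ) + 1 - 2 * ((i : ℝ) + 1)) ^ 2 :=
      mul_nonneg hd2.le (sq_nonneg _)
    rw [hc]
    nlinarith [key]
  have hstrict : ∃ i ∈ Finset.range n,
      ((i : ℝ) + 1) * ((n : ℝ) - (i : ℝ)) * d ^ 2
        < (c + ((i : ℝ) + 1)) * (c + ((n : ℝ) - (i : ℝ))) := by
    refine ⟨0, Finset.mem_range.mpr (by omega), ?_⟩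
    have hn' : (2 : ℝ) ≤ (n : ℝ) := by exact_mod_cast hn
    have hd2 : 0 < d ^ 2 - 1 := by nlinarith
    have key : 0 < (d ^ 2 - 1) * ((n : ℝ) - 1) ^ 2 := by
      apply mul_pos hd2
      nlinarith
    rw [hc]
    push_cast
    nlinarith [key]
  have hpos' : ∀ i ∈ Finset.range n,
      0 < ((i : ℝ) + 1) * ((n : ℝ) - (i : ℝ)) * d ^ 2 := by
    intro i hi
    simp only [Finset.mem_range] at hi
    have hin : (i : ℝ) + 1 ≤ (n : ℝ) := by exact_mod_cast hi
    have h1 : (0 : ℝ) < (i : ℝ) + 1 := by positivity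
    have h2 : (0 : ℝ) < (n : ℝ) - (i : ℝ) := by linarith
    have h3 : (0 : ℝ) < d ^ 2 := by positivity
    positivity
  have hprodlt : ∏ i ∈ Finset.range n,
      (((i : ℝ) + 1) * ((n : ℝ) - (i : ℝ)) * d ^ 2) < P * P := by
    rw [hsq]
    exact Finset.prod_lt_prod hpos' hterm hstrict
  -- compute the lower product
  have hfact : ∏ i ∈ Finset.range n, ((i : ℝ) + 1) = (Nat.factorial n : ℝ) := by
    rw [← Finset.prod_range_add_one_eq_factorial n]
    push_cast
    rfl
  have hfact2 : ∏ i ∈ Finset.range n, ((n : ℝ) - (i : ℝ)) = (Nat.factorial n : ℝ) := by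
    rw [← hfact, ← Finset.prod_range_reflect (fun i => (n : ℝ) - (i : ℝ)) n]
    apply Finset.prod_congr rfl
    intro i hi
    simp only [Finset.mem_range] at hi
    have h1 : (n - 1 - i) + (i + 1) = n := by omega
    have h2 : ((n - 1 - i : ℕ) : ℝ) = (n : ℝ) - (i : ℝ) - 1 := by
      have := congrArg (Nat.cast : ℕ → ℝ) h1
      push_cast at this
      linarith
    rw [h2]
    ring
  have hcomp : ∏ i ∈ Finset.range n,
      (((i : ℝ) + 1) * ((n : ℝ) - (i : ℝ)) * d ^ 2)
      = ((Nat.factorial n : ℝ) * d ^ n) ^ 2 := by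
    rw [Finset.prod_mul_distrib, Finset.prod_mul_distrib, hfact, hfact2,
      Finset.prod_const, Finset.card_range]
    ring
  rw [hcomp] at hprodlt
  have hfinal : ((Nat.factorial n : ℝ) * d ^ n) ^ 2 < P ^ 2 := by
    nlinarith [hprodlt]
  have h0 : (0 : ℝ) ≤ (Nat.factorial n : ℝ) * d ^ n := by positivity
  exact lt_of_pow_lt_pow_left₀ 2 hPpos.le hfinal
end

section
/- Let n ≥ 1, r ≥ 1, d ≥ 1 be integers and let a_1, …, a_r be complex numbers. If the polynomial identity Σ_{l=1}^{r} binom(a_l + d·t + n, n) = r · d^n · binom(t + n, n) holds in the polynomial ring ℂ[t], then Σ_{l=1}^{r} a_l = r(n+1)(d−1)/2. -/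
open Polynomial Finset

/-- The generalized binomial coefficient `binom(p, n) = p(p−1)⋯(p−n+1)/n!`
for a polynomial `p` over `ℂ`. -/
noncomputable def polyBinom (p : Polynomial ℂ) (n : ℕ) : Polynomial ℂ :=
  Polynomial.C ((Nat.factorial n : ℂ)⁻¹) * ∏ k ∈ Finset.range n, (p - Polynomial.C (k : ℂ))

lemma aux_coeff (d : ℂ) (b : ℕ → ℂ) (s : Finset ℕ) :
    (∀ m, s.card < m → (∏ k ∈ s, (C (b k) + C d * X)).coeff m = 0) ∧
    (∏ k ∈ s, (C (b k) + C d * X)).coeff s.card = d ^ s.card ∧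
    (∀ m, m + 1 = s.card → (∏ k ∈ s, (C (b k) + C d * X)).coeff m
        = d ^ m * ∑ k ∈ s, b k) := by
  induction s using Finset.induction_on with
  | empty => simp only [Finset.prod_empty, Finset.card_empty]
             refine ⟨?_, by simp, ?_⟩
             · intro m hm; rw [coeff_one, if_neg (by omega)]
             · intro m hm; omega
  | insert i t hi ih =>
    obtain ⟨h0, h1, h2⟩ := ih
    rw [Finset.prod_insert hi, Finset.card_insert_of_notMem hi]
    have key : ∀ m, ((C (b i) + C d * X) * ∏ k ∈ t, (C (b k) + C d * X)).coeff m
        = b i * (∏ k ∈ t, (C (b k) + C d * X)).coeff m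
          + d * (X * ∏ k ∈ t, (C (b k) + C d * X)).coeff m := by
      intro m
      rw [add_mul, coeff_add, coeff_C_mul, mul_assoc, coeff_C_mul]
    refine ⟨?_, ?_, ?_⟩
    · intro m hm
      rw [key]
      obtain ⟨m', rfl⟩ : ∃ m', m = m' + 1 := ⟨m - 1, by omega⟩
      rw [coeff_X_mul, h0 _ (by omega), h0 _ (by omega)]
      ring
    · rw [key, coeff_X_mul, h0 _ (by omega), h1]
      ring
    · intro m hm
      rw [key]
      rcases Nat.eq_zero_or_pos m with rfl | hmpos
      · rw [mul_coeff_zero, coeff_X_zero, zero_mul, mul_zero, add_zero]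
        have ht : t = ∅ := Finset.card_eq_zero.mp (by omega)
        subst ht; simp
      · obtain ⟨m', rfl⟩ : ∃ m', m = m' + 1 := ⟨m - 1, by omega⟩
        have ht : t.card = m' + 1 := by omega
        rw [coeff_X_mul]
        rw [ht] at h1
        rw [h1, h2 _ (by omega), Finset.sum_insert hi]
        ring

/-- If `Σ_{l=1}^{r} binom(a_l + d·t + n, n) = r · d^n · binom(t + n, n)` holds in `ℂ[t]`,
then `Σ_{l=1}^{r} a_l = r(n+1)(d−1)/2`. -/
theorem stmt_3 (n r d : ℕ) (hn : 1 ≤ n) (hr : 1 ≤ r) (hd : 1 ≤ d) (a : Fin r → ℂ)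
    (h : ∑ l : Fin r,
          polyBinom (Polynomial.C (a l) + Polynomial.C (d : ℂ) * Polynomial.X
            + Polynomial.C (n : ℂ)) n
        = Polynomial.C ((r : ℂ) * (d : ℂ) ^ n) * polyBinom (Polynomial.X + Polynomial.C (n : ℂ)) n) :
    ∑ l : Fin r, a l = (r : ℂ) * ((n : ℂ) + 1) * ((d : ℂ) - 1) / 2 := by
  have hfac : (Nat.factorial n : ℂ) ≠ 0 := Nat.cast_ne_zero.mpr n.factorial_ne_zero
  have hd0 : (d : ℂ) ≠ 0 := Nat.cast_ne_zero.mpr (by omega)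
  have hn0 : (n : ℂ) ≠ 0 := Nat.cast_ne_zero.mpr (by omega)
  have gauss : (∑ k ∈ Finset.range n, (k : ℂ)) = (n : ℂ) * ((n : ℂ) - 1) / 2 := by
    have h2 := Finset.sum_range_id_mul_two n
    have h5 : (((∑ i ∈ Finset.range n, i) * 2 : ℕ) : ℂ) = ((n * (n - 1) : ℕ) : ℂ) := by
      rw [h2]
    push_cast [Nat.cast_sub hn] at h5
    linear_combination h5 / 2
  have L : ∀ c : ℂ, polyBinom (C c + C (d : ℂ) * X + C (n : ℂ)) n
      = C ((n.factorial : ℂ)⁻¹) * ∏ k ∈ Finset.range n, (C (c + n - k) + C (d : ℂ) * X) := by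
    intro c
    unfold polyBinom
    congr 1
    refine Finset.prod_congr rfl fun k _ => ?_
    simp only [map_add, map_sub]
    ring
  have R : polyBinom (X + C (n : ℂ)) n
      = C ((n.factorial : ℂ)⁻¹) * ∏ k ∈ Finset.range n, (C ((n : ℂ) - k) + C (1 : ℂ) * X) := by
    unfold polyBinom
    congr 1
    refine Finset.prod_congr rfl fun k _ => ?_
    simp only [map_sub, map_one]
    ring
  rw [R] at h
  simp only [L] at h
  have hc := congrArg (fun p => p.coeff (n - 1)) h
  simp only [finset_sum_coeff, coeff_C_mul] at hc
  have key := fun c : ℂ =>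
    (aux_coeff (d : ℂ) (fun k => c + n - k) (Finset.range n)).2.2 (n - 1)
      (by rw [Finset.card_range]; omega)
  have key2 := (aux_coeff (1 : ℂ) (fun k => (n : ℂ) - k) (Finset.range n)).2.2 (n - 1)
      (by rw [Finset.card_range]; omega)
  simp only [key, key2, one_pow] at hc
  simp only [Finset.sum_sub_distrib, Finset.sum_add_distrib, Finset.sum_const,
    Finset.card_range, nsmul_eq_mul, gauss] at hc
  have expand : ∀ x : ℂ, (n.factorial : ℂ)⁻¹ *
      ((d : ℂ) ^ (n - 1) * ((n : ℂ) * x + ((n : ℂ) * (n : ℂ) - (n : ℂ) * ((n : ℂ) - 1) / 2)))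
      = ((n.factorial : ℂ)⁻¹ * (d : ℂ) ^ (n - 1) * (n : ℂ)) * x
        + (n.factorial : ℂ)⁻¹ * (d : ℂ) ^ (n - 1) * ((n : ℂ) * (n : ℂ) - (n : ℂ) * ((n : ℂ) - 1) / 2) := by
    intro x; ring
  simp only [expand, Finset.sum_add_distrib, ← Finset.mul_sum, Finset.sum_const,
    Finset.card_univ, Fintype.card_fin, nsmul_eq_mul] at hc
  simp only [Finset.sum_add_distrib, Finset.sum_sub_distrib, ← Finset.mul_sum,
    Finset.sum_const, Finset.card_univ, Fintype.card_fin, nsmul_eq_mul] at hc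
  have hdn : (d : ℂ) ^ n = (d : ℂ) ^ (n - 1) * (d : ℂ) := by
    conv_lhs => rw [show n = (n - 1) + 1 by omega]
    rw [pow_succ]
  field_simp [hdn] at hc
  have hz : (d : ℂ) ^ (n - 1) * ((n : ℂ) *
      ((∑ l : Fin r, a l) * 2 - (r : ℂ) * ((n : ℂ) + 1) * ((d : ℂ) - 1))) = 0 := by
    linear_combination (n : ℂ) * hc + (n : ℂ) * (r : ℂ) * ((n : ℂ) + 1) * hdn
  have hz1 := (mul_eq_zero.mp hz).resolve_left (pow_ne_zero _ hd0)
  have hz2 := (mul_eq_zero.mp hz1).resolve_left hn0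
  linear_combination hz2 / 2
end

section
/- Let n ≥ 2 and d ≥ 1 be integers and let a, b be complex numbers. If the polynomial identity binom(a + d·t + n, n) + binom(b + d·t + n, n) = 2 · d^n · binom(t + n, n) holds in ℂ[t], then a + b = (n+1)(d−1) and a·b = (n+1)(d−1)·((3n+4)d − (3n+2))/12. -/
open Polynomial Finset

section LinearProduct

variable {R : Type*} [CommRing R] (u : R) (r : ℕ → R)

lemma coeff_mul_C_mul_X_add_C (p : R[X]) (c : R) (k : ℕ) :
    (p * (C u * X + C c)).coeff (k + 1) = p.coeff k * u + p.coeff (k + 1) * c := by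
  rw [mul_add, coeff_add, mul_left_comm, coeff_C_mul, coeff_mul_X, coeff_mul_C, mul_comm u]

lemma coeff_prod_range_C_mul_X_add_C_self (n : ℕ) :
    (∏ k ∈ range n, (C u * X + C (r k))).coeff n = u ^ n := by
  simpa using coeff_prod_of_natDegree_le (s := range n) (fun k => C u * X + C (r k)) 1
    fun _ _ => natDegree_linear_le

lemma coeff_prod_range_succ_C_mul_X_add_C (n : ℕ) :
    (∏ k ∈ range (n + 1), (C u * X + C (r k))).coeff n = u ^ n * ∑ k ∈ range (n + 1), r k := by
  induction n with
  | zero => simp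
  | succ n ih =>
    rw [prod_range_succ, coeff_mul_C_mul_X_add_C, ih, coeff_prod_range_C_mul_X_add_C_self,
      sum_range_succ _ (n + 1)]
    ring

lemma two_mul_coeff_prod_range_add_two_C_mul_X_add_C (n : ℕ) :
    2 * (∏ k ∈ range (n + 2), (C u * X + C (r k))).coeff n
      = u ^ n * ((∑ k ∈ range (n + 2), r k) ^ 2 - ∑ k ∈ range (n + 2), r k ^ 2) := by
  induction n with
  | zero =>
    simp only [prod_range_succ, range_one, prod_singleton, coeff_zero_eq_eval_zero, eval_mul,
      eval_add, eval_C, eval_X, mul_zero, zero_add, pow_zero, sum_range_succ, sum_singleton,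
      one_mul]
    ring
  | succ n ih =>
    rw [prod_range_succ, coeff_mul_C_mul_X_add_C, mul_add, ← mul_assoc, ih,
      coeff_prod_range_succ_C_mul_X_add_C, sum_range_succ r (n + 2),
      sum_range_succ (fun k => r k ^ 2) (n + 2)]
    ring

lemma two_mul_sum_range_sub (c : R) (n : ℕ) :
    2 * ∑ k ∈ range n, (c - k) = n * (2 * c - (n - 1)) := by
  induction n with
  | zero => simp
  | succ n ih => rw [sum_range_succ, mul_add, ih]; push_cast; ring

lemma six_mul_sum_range_sub_sq (c : R) (n : ℕ) :
    6 * ∑ k ∈ range n, (c - k) ^ 2 = n * (6 * c ^ 2 - 6 * (n - 1) * c + (n - 1) * (2 * n - 1)) := by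
  induction n with
  | zero => simp
  | succ n ih => rw [sum_range_succ, mul_add, ih]; push_cast; ring

end LinearProduct

lemma polyBinom_C_add_C_mul_X (c u : ℂ) (n : ℕ) :
    polyBinom (C c + C u * X) n
      = C ((n.factorial : ℂ)⁻¹) * ∏ k ∈ range n, (C u * X + C (c - k)) := by
  simp only [polyBinom, C_sub]
  congr 1
  exact prod_congr rfl fun k _ => by ring

lemma factorial_mul_coeff_polyBinom_sub_one (c u : ℂ) (n : ℕ) :
    ((n + 1).factorial : ℂ) * (polyBinom (C c + C u * X) (n + 1)).coeff n * 2
      = u ^ n * (n + 1) * (2 * c - n) := by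
  have hfac : ((n + 1).factorial : ℂ) ≠ 0 := by exact_mod_cast (n + 1).factorial_ne_zero
  have hsum := two_mul_sum_range_sub c (n + 1)
  push_cast at hsum
  rw [polyBinom_C_add_C_mul_X, coeff_C_mul, coeff_prod_range_succ_C_mul_X_add_C,
    mul_inv_cancel_left₀ hfac]
  linear_combination u ^ n * hsum

lemma factorial_mul_coeff_polyBinom_sub_two (c u : ℂ) (n : ℕ) :
    ((n + 2).factorial : ℂ) * (polyBinom (C c + C u * X) (n + 2)).coeff n * 24
      = u ^ n * (n + 2) * (n + 1) * (12 * c ^ 2 - 12 * (n + 1) * c + n * (3 * n + 5)) := by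
  have hfac : ((n + 2).factorial : ℂ) ≠ 0 := by exact_mod_cast (n + 2).factorial_ne_zero
  have hsum := two_mul_sum_range_sub c (n + 2)
  have hsq := six_mul_sum_range_sub_sq c (n + 2)
  have hcoeff := two_mul_coeff_prod_range_add_two_C_mul_X_add_C u (fun k => c - k) n
  push_cast at hsum hsq
  rw [polyBinom_C_add_C_mul_X, coeff_C_mul, mul_inv_cancel_left₀ hfac]
  -- `12 (S² - Q) = 3 (2S)² - 2 (6Q)` for `S = ∑ (c - k)`, `Q = ∑ (c - k)²`
  linear_combination 12 * hcoeff - 2 * u ^ n * hsq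
    + 3 * u ^ n * (2 * ∑ k ∈ range (n + 2), (c - k) + (n + 2) * (2 * c - (n + 1))) * hsum

section CoefficientComparison

variable {c₁ c₂ c₀ u v s : ℂ} {n : ℕ}

lemma eq_of_polyBinom_add_eq_coeff_sub_one
    (h : polyBinom (C c₁ + C u * X) (n + 1) + polyBinom (C c₂ + C u * X) (n + 1)
      = C s * polyBinom (C c₀ + C v * X) (n + 1)) :
    u ^ n * (2 * c₁ - n) + u ^ n * (2 * c₂ - n) = s * (v ^ n * (2 * c₀ - n)) := by
  have hcoeff := congrArg (coeff · n) h
  simp only [coeff_add, coeff_C_mul] at hcoeff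
  have h₁ := factorial_mul_coeff_polyBinom_sub_one c₁ u n
  have h₂ := factorial_mul_coeff_polyBinom_sub_one c₂ u n
  have h₀ := factorial_mul_coeff_polyBinom_sub_one c₀ v n
  refine mul_left_cancel₀ (by exact_mod_cast n.succ_ne_zero : (n : ℂ) + 1 ≠ 0) ?_
  linear_combination ((n + 1).factorial * 2 : ℂ) * hcoeff - h₁ - h₂ + s * h₀

lemma eq_of_polyBinom_add_eq_coeff_sub_two
    (h : polyBinom (C c₁ + C u * X) (n + 2) + polyBinom (C c₂ + C u * X) (n + 2)
      = C s * polyBinom (C c₀ + C v * X) (n + 2)) :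
    u ^ n * (12 * c₁ ^ 2 - 12 * (n + 1) * c₁ + n * (3 * n + 5))
      + u ^ n * (12 * c₂ ^ 2 - 12 * (n + 1) * c₂ + n * (3 * n + 5))
      = s * (v ^ n * (12 * c₀ ^ 2 - 12 * (n + 1) * c₀ + n * (3 * n + 5))) := by
  have hcoeff := congrArg (coeff · n) h
  simp only [coeff_add, coeff_C_mul] at hcoeff
  have h₁ := factorial_mul_coeff_polyBinom_sub_two c₁ u n
  have h₂ := factorial_mul_coeff_polyBinom_sub_two c₂ u n
  have h₀ := factorial_mul_coeff_polyBinom_sub_two c₀ v n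
  have hn₁ : (n : ℂ) + 1 ≠ 0 := by exact_mod_cast n.succ_ne_zero
  have hn₂ : (n : ℂ) + 2 ≠ 0 := by exact_mod_cast (n + 1).succ_ne_zero
  refine mul_left_cancel₀ (mul_ne_zero hn₂ hn₁) ?_
  linear_combination ((n + 2).factorial * 24 : ℂ) * hcoeff - h₁ - h₂ + s * h₀

end CoefficientComparison

/-- If `binom(a + d·t + n, n) + binom(b + d·t + n, n) = 2 d^n binom(t + n, n)` holds in `ℂ[t]`
with `n ≥ 2`, `d ≥ 1`, then `a + b = (n+1)(d−1)` and
`a·b = (n+1)(d−1)((3n+4)d − (3n+2))/12`. -/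
theorem stmt_4 (n d : ℕ) (hn : 2 ≤ n) (hd : 1 ≤ d) (a b : ℂ)
    (h : polyBinom (Polynomial.C a + Polynomial.C (d : ℂ) * Polynomial.X
            + Polynomial.C (n : ℂ)) n
        + polyBinom (Polynomial.C b + Polynomial.C (d : ℂ) * Polynomial.X
            + Polynomial.C (n : ℂ)) n
        = Polynomial.C (2 * (d : ℂ) ^ n) * polyBinom (Polynomial.X + Polynomial.C (n : ℂ)) n) :
    a + b = ((n : ℂ) + 1) * ((d : ℂ) - 1) ∧
      a * b = ((n : ℂ) + 1) * ((d : ℂ) - 1) * ((3 * (n : ℂ) + 4) * (d : ℂ) - (3 * (n : ℂ) + 2)) / 12 := by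
  obtain ⟨m, rfl⟩ : ∃ m, n = m + 2 := ⟨n - 2, by omega⟩
  have hshift (c N : ℂ) : C c + C (d : ℂ) * X + C N = C (c + N) + C (d : ℂ) * X := by
    rw [C_add]; ring
  have hshift₀ (N : ℂ) : X + C N = C N + C 1 * X := by rw [C_1]; ring
  rw [hshift, hshift, hshift₀] at h
  have E₁ := eq_of_polyBinom_add_eq_coeff_sub_one (n := m + 1) h
  have E₂ := eq_of_polyBinom_add_eq_coeff_sub_two h
  push_cast at E₁ E₂ ⊢
  have hd₀ : (d : ℂ) ≠ 0 := by exact_mod_cast (by omega : d ≠ 0)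
  have hsum : a + b = ((m : ℂ) + 3) * ((d : ℂ) - 1) := by
    refine mul_left_cancel₀ (by simp [hd₀] : 2 * (d : ℂ) ^ (m + 1) ≠ 0) ?_
    linear_combination E₁
  refine ⟨by linear_combination hsum, ?_⟩
  obtain rfl : b = ((m : ℂ) + 3) * ((d : ℂ) - 1) - a := by linear_combination hsum
  refine mul_left_cancel₀ (by simp [hd₀] : 24 * (d : ℂ) ^ m ≠ 0) ?_
  linear_combination -E₂
end

section
/- Let n ≥ 1 be an integer, let j be an integer with 1 ≤ j ≤ n, and let i be an integer with −n ≤ i ≤ −1 and i + j ≠ 0. Then Σ_{k=0}^{j} (−1)^{j−k} C(n+1, k) · binom(i + j − k + n, n) = 0, where for an integer m, binom(m + n, n) denotes the generalized binomial coefficient ∏_{l=1}^{n} (m + l) / n! ∈ ℚ. -/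
open Finset Polynomial PowerSeries

lemma aux_prod_nat (b n : ℕ) :
    ∏ l ∈ Icc 1 n, (b + l) = n.factorial * (b + n).choose n := by
  induction n with
  | zero => simp
  | succ n ih =>
    rw [Finset.prod_Icc_succ_top (by omega), ih, Nat.factorial_succ]
    have h : (b + n + 1) * (b + n).choose n = (b + n + 1).choose (n + 1) * (n + 1) :=
      Nat.add_one_mul_choose_eq (b + n) n
    have hbn : b + (n + 1) = b + n + 1 := by omega
    rw [hbn]
    calc n.factorial * (b + n).choose n * (b + n + 1)
        = (b + n + 1) * (b + n).choose n * n.factorial := by ring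
      _ = (b + n + 1).choose (n + 1) * (n + 1) * n.factorial := by rw [h]
      _ = (n + 1) * n.factorial * (b + n + 1).choose (n + 1) := by ring

lemma poly_coeff (d k : ℕ) :
    ((1 - Polynomial.X : ℚ[X]) ^ d).coeff k = (-1 : ℚ) ^ k * d.choose k := by
  induction d generalizing k with
  | zero => cases k <;> simp [Polynomial.coeff_one]
  | succ d ih =>
    have hsplit : (1 - Polynomial.X : ℚ[X]) ^ (d + 1)
        = (1 - Polynomial.X) ^ d - (1 - Polynomial.X) ^ d * Polynomial.X := by
      ring
    rw [hsplit, Polynomial.coeff_sub]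
    cases k with
    | zero => simp [ih]
    | succ k =>
      rw [Polynomial.coeff_mul_X, ih, ih, Nat.choose_succ_succ]
      push_cast
      ring

lemma ps_coeff (d k : ℕ) :
    PowerSeries.coeff k ((1 - PowerSeries.X) ^ d) = (-1 : ℚ) ^ k * d.choose k := by
  have h : ((((1 - Polynomial.X : ℚ[X]) ^ d : ℚ[X])) : ℚ⟦X⟧)
      = (1 - PowerSeries.X) ^ d := by
    push_cast
    simp
  rw [← h, Polynomial.coeff_coe, poly_coeff]

lemma key (n m : ℕ) (hm : 1 ≤ m) :
    ∑ k ∈ range (m + 1),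
      (-1 : ℚ) ^ k * ((n + 1).choose k) * ((n + (m - k)).choose n) = 0 := by
  have h1 : PowerSeries.coeff m
      ((1 - PowerSeries.X) ^ (n + 1) * (PowerSeries.invOneSubPow ℚ (n + 1)).val) = 0 := by
    rw [← PowerSeries.invOneSubPow_inv_eq_one_sub_pow,
      (PowerSeries.invOneSubPow ℚ (n + 1)).inv_val]
    simp only [PowerSeries.coeff_one, if_neg (by omega : ¬ m = 0)]
  rw [PowerSeries.coeff_mul, Finset.Nat.sum_antidiagonal_eq_sum_range_succ_mk] at h1
  simp only [PowerSeries.invOneSubPow_val_succ_eq_mk_add_choose, PowerSeries.coeff_mk,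
    ps_coeff] at h1
  rw [← h1]

lemma prod_zero (n : ℕ) (a : ℤ) (h1 : a ≤ -1) (h2 : -(n : ℤ) ≤ a) :
    ∏ l ∈ Icc 1 n, ((a + (l : ℤ) : ℤ) : ℚ) = 0 := by
  apply Finset.prod_eq_zero (i := (-a).toNat)
  · simp only [Finset.mem_Icc]; omega
  · have h : ((((-a).toNat : ℕ) : ℤ)) = -a := by omega
    rw [h]
    simp

/-- For `1 ≤ j ≤ n`, `−n ≤ i ≤ −1` and `i + j ≠ 0`,
`Σ_{k=0}^{j} (−1)^{j−k} C(n+1, k) · binom(i + j − k + n, n) = 0`, where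
`binom(m + n, n) = ∏_{l=1}^{n} (m + l) / n!` is the generalized binomial coefficient. -/
theorem stmt_8 (n : ℕ) (hn : 1 ≤ n) (j : ℕ) (hj1 : 1 ≤ j) (hjn : j ≤ n)
    (i : ℤ) (hi1 : -(n : ℤ) ≤ i) (hi2 : i ≤ -1) (hij : i + (j : ℤ) ≠ 0) :
    ∑ k ∈ Finset.range (j + 1),
      (-1 : ℚ) ^ (j - k) * (Nat.choose (n + 1) k : ℚ) *
        ((∏ l ∈ Finset.Icc 1 n, ((i + (j : ℤ) - (k : ℤ) + (l : ℤ) : ℤ) : ℚ)) /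
          (Nat.factorial n : ℚ)) = 0 := by
  rcases lt_or_gt_of_ne hij with hneg | hpos
  · -- i + j < 0 : every term vanishes
    apply Finset.sum_eq_zero
    intro k hk
    simp only [Finset.mem_range] at hk
    have hz : ∏ l ∈ Finset.Icc 1 n, ((i + (j : ℤ) - (k : ℤ) + (l : ℤ) : ℤ) : ℚ) = 0 :=
      prod_zero n (i + (j : ℤ) - (k : ℤ)) (by omega) (by omega)
    rw [hz]
    simp
  · -- i + j > 0
    set M : ℕ := (i + (j : ℤ)).toNat with hM
    have hM1 : 1 ≤ M := by omega
    have hMj : M < j := by omega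
    have hMz : (M : ℤ) = i + (j : ℤ) := by omega
    rw [← Finset.sum_range_add_sum_Ico _ (by omega : M + 1 ≤ j + 1)]
    have h2 : ∑ k ∈ Finset.Ico (M + 1) (j + 1),
        (-1 : ℚ) ^ (j - k) * (Nat.choose (n + 1) k : ℚ) *
          ((∏ l ∈ Finset.Icc 1 n, ((i + (j : ℤ) - (k : ℤ) + (l : ℤ) : ℤ) : ℚ)) /
            (Nat.factorial n : ℚ)) = 0 := by
      apply Finset.sum_eq_zero
      intro k hk
      simp only [Finset.mem_Ico] at hk
      have hz : ∏ l ∈ Finset.Icc 1 n, ((i + (j : ℤ) - (k : ℤ) + (l : ℤ) : ℤ) : ℚ) = 0 :=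
        prod_zero n (i + (j : ℤ) - (k : ℤ)) (by omega) (by omega)
      rw [hz]
      simp
    rw [h2, add_zero]
    have h3 : ∀ k ∈ Finset.range (M + 1),
        (-1 : ℚ) ^ (j - k) * (Nat.choose (n + 1) k : ℚ) *
          ((∏ l ∈ Finset.Icc 1 n, ((i + (j : ℤ) - (k : ℤ) + (l : ℤ) : ℤ) : ℚ)) /
            (Nat.factorial n : ℚ))
        = (-1 : ℚ) ^ j *
            ((-1 : ℚ) ^ k * ((n + 1).choose k : ℚ) * ((n + (M - k)).choose n : ℚ)) := by
      intro k hk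
      simp only [Finset.mem_range] at hk
      have hprod : ∏ l ∈ Finset.Icc 1 n, ((i + (j : ℤ) - (k : ℤ) + (l : ℤ) : ℤ) : ℚ)
          = ((∏ l ∈ Finset.Icc 1 n, ((M - k) + l) : ℕ) : ℚ) := by
        rw [Nat.cast_prod]
        apply Finset.prod_congr rfl
        intro l _
        have hl : (i + (j : ℤ) - (k : ℤ) + (l : ℤ)) = (((M - k) + l : ℕ) : ℤ) := by omega
        rw [hl]
        push_cast
        ring
      have hne : ((n.factorial : ℚ)) ≠ 0 := Nat.cast_ne_zero.mpr n.factorial_ne_zero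
      have hdiv : ((∏ l ∈ Finset.Icc 1 n, ((M - k) + l) : ℕ) : ℚ) / (n.factorial : ℚ)
          = ((n + (M - k)).choose n : ℚ) := by
        rw [aux_prod_nat, Nat.add_comm (M - k) n, Nat.cast_mul, mul_comm,
          mul_div_assoc, div_self hne, mul_one]
      rw [hprod, hdiv]
      have hkj : k ≤ j := by omega
      have h5 : (-1 : ℚ) ^ (j - k) = (-1 : ℚ) ^ j * (-1 : ℚ) ^ k := by
        rw [pow_sub₀ (-1 : ℚ) (by norm_num) hkj]
        rw [← inv_pow, inv_neg, inv_one]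
      rw [h5]
      ring
    rw [Finset.sum_congr rfl h3, ← Finset.mul_sum, key n M hM1, mul_zero]
end

section
/- Let k be a field, let d ≥ 2 be an integer, and let (x, y, z) ∈ k³ be nonzero. Let M be the (d−1) × (d+1) matrix over k with entries M_{i,i} = x, M_{i,i+1} = y, M_{i,i+2} = z for 1 ≤ i ≤ d−1, and all other entries 0. Then M has rank d−1 (its rows are linearly independent). -/
/-!
Let `c` be the first nonzero coefficient among `x, y, z` and `s ∈ {0, 1, 2}` its offset from
the diagonal. The square submatrix on the columns `s, s + 1, …, s + d - 2` is upper triangular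
with every diagonal entry equal to `c`, hence invertible, so already its rows are independent.
-/

open Matrix

theorem Matrix.linearIndependent_rows_of_isUnit_det_submatrix {R m n : Type*} [CommRing R]
    [Fintype m] [DecidableEq m] (M : Matrix m n R) (c : m → n)
    (h : IsUnit (M.submatrix id c).det) : LinearIndependent R M.row :=
  (linearIndependent_rows_of_isUnit ((isUnit_iff_isUnit_det _).2 h)).of_comp
    (LinearMap.funLeft R R c)

theorem Matrix.linearIndependent_rows_of_upperToeplitz {R : Type*} [CommRing R] {m n : ℕ}
    (M : Matrix (Fin m) (Fin n) R) (a : ℕ → R)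
    (hM : ∀ i j, M i j = if (i : ℕ) ≤ j then a (j - i) else 0)
    (s : ℕ) (hmn : m + s ≤ n) (hs : IsUnit (a s)) (hlt : ∀ t < s, a t = 0) :
    LinearIndependent R M.row := by
  set N : Matrix (Fin m) (Fin m) R := M.submatrix id fun j => Fin.castLE hmn (j.addNat s)
  have hN (i j : Fin m) : N i j = if (i : ℕ) ≤ j + s then a (j + s - i) else 0 := hM _ _
  have hupper : N.IsUpperTriangular := fun i j hji => by
    rw [hN]
    split_ifs
    · exact hlt _ (by simp at hji; omega)
    · rfl
  have hdet : N.det = a s ^ m := by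
    simp [det_of_isUpperTriangular hupper, hN]
  exact M.linearIndependent_rows_of_isUnit_det_submatrix _ (hdet ▸ hs.pow m)

theorem Matrix.linearIndependent_rows_of_banded {k : Type*} [Field k] {m n : ℕ}
    (hmn : m + 2 ≤ n) (x y z : k) (hxyz : (x, y, z) ≠ (0, 0, 0))
    (M : Matrix (Fin m) (Fin n) k)
    (hM : ∀ (i : Fin m) (j : Fin n),
      M i j = if (j : ℕ) = (i : ℕ) then x
        else if (j : ℕ) = (i : ℕ) + 1 then y
        else if (j : ℕ) = (i : ℕ) + 2 then z
        else 0) :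
    LinearIndependent k M.row := by
  classical
  let a : ℕ → k := fun t => if t = 0 then x else if t = 1 then y else if t = 2 then z else 0
  have hex : ∃ t, a t ≠ 0 := by
    by_contra! h
    exact hxyz (by simpa [a] using And.intro (h 0) (And.intro (h 1) (h 2)))
  have hs_le : Nat.find hex ≤ 2 := by
    by_contra! h
    exact Nat.find_spec hex (by simp only [a]; split_ifs <;> first | omega | rfl)
  refine M.linearIndependent_rows_of_upperToeplitz a (fun i j => ?_) (Nat.find hex) (by omega)
    (Nat.find_spec hex).isUnit fun t ht => not_not.1 (Nat.find_min hex ht)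
  rw [hM]
  simp only [a]
  split_ifs <;> first | omega | rfl

/-- The banded `(d−1) × (d+1)` matrix with entries `M_{i,i} = x`, `M_{i,i+1} = y`,
`M_{i,i+2} = z` and all other entries `0` has rank `d−1` (its rows are linearly
independent) whenever `(x, y, z) ≠ (0, 0, 0)`. -/
theorem stmt_12 (k : Type*) [Field k] (d : ℕ) (hd : 2 ≤ d)
    (x y z : k) (hxyz : (x, y, z) ≠ (0, 0, 0))
    (M : Matrix (Fin (d - 1)) (Fin (d + 1)) k)
    (hM : ∀ (i : Fin (d - 1)) (j : Fin (d + 1)),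
      M i j = if (j : ℕ) = (i : ℕ) then x
        else if (j : ℕ) = (i : ℕ) + 1 then y
        else if (j : ℕ) = (i : ℕ) + 2 then z
        else 0) :
    M.rank = d - 1 ∧ LinearIndependent k (fun i : Fin (d - 1) => M i) := by
  have hli := linearIndependent_rows_of_banded (by omega) x y z hxyz M hM
  exact ⟨by simpa using hli.rank_matrix, hli⟩
end

section
/- Let k be a field and let (x, y, z, w) ∈ k⁴ be nonzero. Let β be the 4 × 5 matrix over k with rows (y, z, w, 0, 0), (−x, 0, 0, z, w), (w, −x, 0, −y, 0), (−z, 0, −x, 0, −y). Then the row vector (x, y, z, w) multiplied by β is the zero vector in k⁵, and β has rank 3. -/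
/-!
The vector `(x, y, z, w)` is a nonzero left kernel vector of `β`, so the four rows of `β` are
dependent and `rank β ≤ 3`. Conversely each coordinate `t` has a `3 × 3` minor of `β` equal to
`± t³`, and some coordinate is nonzero, so `rank β ≥ 3`.
-/

open Matrix

namespace Matrix

variable {K : Type*} [Field K] {m n r : Type*}

theorem rank_lt_card_height_of_vecMul_eq_zero [Fintype m] [Fintype n] (A : Matrix m n K)
    {v : m → K} (hv : v ≠ 0) (hvA : v ᵥ* A = 0) : A.rank < Fintype.card m := by
  have hdep : ¬LinearIndependent K A.row := fun hA =>
    hv (Fintype.linearIndependent_iff.mp hA v ((vecMul_eq_sum v A).symm.trans hvA) |> funext)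
  rw [rank_eq_finrank_span_row]
  exact lt_of_le_of_ne (finrank_range_le_card _)
    (fun h => hdep (linearIndependent_iff_card_eq_finrank_span.mpr h.symm))

theorem card_le_rank_of_det_submatrix_ne_zero [Fintype n] [Fintype r] [DecidableEq r]
    (A : Matrix m n K) (rows : r → m) (cols : r → n) (h : (A.submatrix rows cols).det ≠ 0) :
    Fintype.card r ≤ A.rank :=
  rank_of_det_ne_zero h ▸ rank_submatrix_le A rows cols

end Matrix

section

variable {k : Type*} [Field k] (x y z w : k)

def betaMatrix : Matrix (Fin 4) (Fin 5) k :=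
  !![y, z, w, 0, 0;
     -x, 0, 0, z, w;
     w, -x, 0, -y, 0;
     -z, 0, -x, 0, -y]

theorem vecMul_betaMatrix : ![x, y, z, w] ᵥ* betaMatrix x y z w = 0 := by
  ext j
  fin_cases j <;> simp [betaMatrix, vecMul, dotProduct, Fin.sum_univ_four] <;> ring

variable {x y z w}

theorem three_le_rank_betaMatrix (hv : ![x, y, z, w] ≠ 0) : 3 ≤ (betaMatrix x y z w).rank := by
  obtain ⟨i, hi⟩ := Function.ne_iff.mp hv
  -- the chosen minors are `-x³`, `y³`, `-z³` and `w³`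
  fin_cases i
  · exact card_le_rank_of_det_submatrix_ne_zero _ ![1, 2, 3] ![0, 1, 2] <| by
      rw [det_fin_three]; simpa [betaMatrix] using hi
  · exact card_le_rank_of_det_submatrix_ne_zero _ ![0, 2, 3] ![0, 3, 4] <| by
      rw [det_fin_three]; simpa [betaMatrix] using hi
  · exact card_le_rank_of_det_submatrix_ne_zero _ ![0, 1, 3] ![0, 1, 3] <| by
      rw [det_fin_three]; simpa [betaMatrix] using hi
  · exact card_le_rank_of_det_submatrix_ne_zero _ ![0, 1, 2] ![0, 2, 4] <| by
      rw [det_fin_three]; simpa [betaMatrix] using hi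

theorem rank_betaMatrix (hv : ![x, y, z, w] ≠ 0) : (betaMatrix x y z w).rank = 3 :=
  le_antisymm
    (Nat.le_of_lt_succ <| rank_lt_card_height_of_vecMul_eq_zero _ hv (vecMul_betaMatrix x y z w))
    (three_le_rank_betaMatrix hv)

end

/-- For `(x, y, z, w) ≠ 0` in `k⁴`, the `4 × 5` matrix `β` with rows
`(y, z, w, 0, 0)`, `(−x, 0, 0, z, w)`, `(w, −x, 0, −y, 0)`, `(−z, 0, −x, 0, −y)`
satisfies `(x, y, z, w) · β = 0` and has rank `3`. -/
theorem stmt_13 (k : Type*) [Field k] (x y z w : k)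
    (hxyzw : (x, y, z, w) ≠ (0, 0, 0, 0))
    (β : Matrix (Fin 4) (Fin 5) k)
    (hβ : β = !![y, z, w, 0, 0;
                 -x, 0, 0, z, w;
                 w, -x, 0, -y, 0;
                 -z, 0, -x, 0, -y]) :
    Matrix.vecMul ![x, y, z, w] β = 0 ∧ β.rank = 3 := by
  subst hβ
  have hv : ![x, y, z, w] ≠ 0 := fun h => hxyzw <| by
    simpa [funext_iff, Fin.forall_fin_succ] using h
  exact ⟨vecMul_betaMatrix x y z w, rank_betaMatrix hv⟩
end
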